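/- Let ε > 0, δx > 0, δt > 0, let z be a complex number with |z| > 1, and set s = s(z) = (2/δt)·(z − 1)/(z + 1). Then the quartic polynomial P(r) = r⁴ + 4εs² r³ − (2 + 4s²(δx² + 2ε)) r² + 4εs² r + 1 has, counted with multiplicity, exactly two roots in the open unit disk {r : |r| < 1} and exactly two roots in {r : |r| > 1}; moreover the product of its four roots equals 1. -/

import Mathlib

/-!
The quartic `P` is self-reciprocal, `r⁴ P(1/r) = P(r)`, so its roots are permuted, with
multiplicity, by `r ↦ r⁻¹`, which exchanges the open unit disk and the exterior of the closed one.
No root lies on the unit circle: there `r + r⁻¹ = 2t` with `t = Re r ∈ [-1, 1]`, and `P(r) = 0`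
becomes `s² (δx² + 2ε(1 - t)) = t² - 1`, making `s²` a nonpositive real, i.e. `Re s = 0`; but
`Re s(z) > 0` for `|z| > 1`. So the four roots split two and two, and their product is the
constant coefficient `1`.
-/

open Polynomial

/-- The Crank–Nicolson symbol `s(z) = (2/δt)·(z-1)/(z+1)`. -/
noncomputable def sCN (δt : ℝ) (z : ℂ) : ℂ := (2 / (δt : ℂ)) * (z - 1) / (z + 1)

theorem Multiset.card_filter_lt_add_card_filter_gt {α β : Type*} [LinearOrder β]
    (s : Multiset α) (f : α → β) (c : β) (hs : ∀ x ∈ s, f x ≠ c) :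
    Multiset.card (s.filter (f · < c)) + Multiset.card (s.filter (c < f ·)) = Multiset.card s := by
  conv_rhs => rw [← Multiset.filter_add_not (fun x => f x < c) s, Multiset.card_add]
  congr 2
  refine Multiset.filter_congr fun x hx => ?_
  rw [not_lt, (hs x hx).symm.le_iff_lt]

namespace Polynomial

theorem reverse_multiset_prod {R : Type*} [CommSemiring R] [NoZeroDivisors R]
    (s : Multiset R[X]) : s.prod.reverse = (s.map reverse).prod := by
  induction s using Multiset.induction_on with
  | empty => simpa using reverse_C (1 : R)
  | cons p s ih => rw [Multiset.prod_cons, reverse_mul_of_domain, ih, Multiset.map_cons,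
      Multiset.prod_cons]

section Field

variable {K : Type*} [Field K]

theorem reverse_X_sub_C {r : K} (hr : r ≠ 0) : (X - C r).reverse = C (-r) * (X - C r⁻¹) := by
  rw [reverse, natDegree_X_sub_C, reflect_sub, reflect_C, ← pow_one X, reflect_monomial]
  simp only [revAt_le le_rfl, Nat.sub_self, pow_zero, pow_one, mul_sub, ← C_mul, neg_mul,
    mul_inv_cancel₀ hr, C_neg, C_1, sub_neg_eq_add]
  ring

theorem roots_reverse {p : K[X]} (hp : p.Splits) (hp0 : p.coeff 0 ≠ 0) :
    p.reverse.roots = p.roots.map (·⁻¹) := by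
  have hroots : ∀ r ∈ p.roots, r ≠ 0 := fun r hr h0 =>
    hp0 (by subst h0; rw [coeff_zero_eq_eval_zero]; exact (mem_roots'.mp hr).2)
  have hlead : p.leadingCoeff ≠ 0 := leadingCoeff_ne_zero.mpr fun h => hp0 (by simp [h])
  have hfactor : (p.roots.map fun r => (X - C r).reverse).prod =
      C (p.roots.map (-·)).prod * ((p.roots.map (·⁻¹)).map (X - C ·)).prod := by
    rw [Multiset.map_congr rfl fun r hr => reverse_X_sub_C (hroots r hr), Multiset.prod_map_mul,
      map_multiset_prod, Multiset.map_map, Multiset.map_map]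
    rfl
  have hunit : p.leadingCoeff * (p.roots.map (-·)).prod ≠ 0 :=
    mul_ne_zero hlead <| Multiset.prod_ne_zero fun h => by
      obtain ⟨r, hr, hr0⟩ := Multiset.mem_map.mp h
      exact hroots r hr (neg_eq_zero.mp hr0)
  conv_lhs => rw [hp.eq_prod_roots, reverse_mul_of_domain, reverse_C, reverse_multiset_prod,
    Multiset.map_map]
  rw [Function.comp_def, hfactor, ← mul_assoc, ← C_mul, roots_C_mul _ hunit,
    roots_multiset_prod_X_sub_C]

end Field

section NormedField

variable {K : Type*} [NormedField K]

theorem card_roots_filter_norm_lt_one_eq_of_reverse_eq {p : K[X]} (hp : p.Splits) (hp0 : p ≠ 0)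
    (hrev : p.reverse = p) :
    Multiset.card (p.roots.filter (‖·‖ < 1)) = Multiset.card (p.roots.filter (1 < ‖·‖)) := by
  have hcoeff : p.coeff 0 ≠ 0 := by
    rw [← hrev, coeff_zero_reverse]
    exact leadingCoeff_ne_zero.mpr hp0
  conv_lhs => rw [← hrev, roots_reverse hp hcoeff, Multiset.filter_map, Multiset.card_map]
  congr 1
  refine Multiset.filter_congr fun r hr => ?_
  have hr0 : r ≠ 0 := fun h => hcoeff (by
    subst h; rw [coeff_zero_eq_eval_zero]; exact (mem_roots'.mp hr).2)
  simp only [Function.comp_apply, norm_inv]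
  exact inv_lt_one₀ (norm_pos_iff.mpr hr0)

theorem card_roots_filter_norm_lt_one_of_reverse_eq {p : K[X]} (hp : p.Splits) (hp0 : p ≠ 0)
    (hrev : p.reverse = p) (hcircle : ∀ r ∈ p.roots, ‖r‖ ≠ 1) :
    Multiset.card (p.roots.filter (‖·‖ < 1)) = p.natDegree / 2 ∧
      Multiset.card (p.roots.filter (1 < ‖·‖)) = p.natDegree / 2 := by
  have hsum := p.roots.card_filter_lt_add_card_filter_gt (‖·‖) 1 hcircle
  have heq := card_roots_filter_norm_lt_one_eq_of_reverse_eq hp hp0 hrev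
  rw [← hp.natDegree_eq_card_roots] at hsum
  omega

end NormedField

noncomputable def selfReciprocalQuartic {R : Type*} [CommRing R] (a b : R) : R[X] :=
  X ^ 4 + C a * X ^ 3 - C b * X ^ 2 + C a * X + C 1

section CommRing

variable {R : Type*} [CommRing R] (a b : R)

theorem monic_selfReciprocalQuartic : (selfReciprocalQuartic a b).Monic := by
  unfold selfReciprocalQuartic; monicity!

theorem natDegree_selfReciprocalQuartic [Nontrivial R] :
    (selfReciprocalQuartic a b).natDegree = 4 := by
  unfold selfReciprocalQuartic; compute_degree!

theorem reverse_selfReciprocalQuartic [Nontrivial R] :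
    (selfReciprocalQuartic a b).reverse = selfReciprocalQuartic a b := by
  have hmonomials : selfReciprocalQuartic a b =
      C 1 * X ^ 4 + C a * X ^ 3 - C b * X ^ 2 + C a * X ^ 1 + C 1 * X ^ 0 := by
    simp [selfReciprocalQuartic]
  rw [reverse, natDegree_selfReciprocalQuartic, hmonomials]
  simp only [reflect_add, reflect_sub, reflect_C_mul_X_pow]
  norm_num [revAt_le]
  ring

end CommRing

theorem roots_prod_selfReciprocalQuartic {K : Type*} [Field K] {a b : K}
    (hp : (selfReciprocalQuartic a b).Splits) : (selfReciprocalQuartic a b).roots.prod = 1 := by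
  have h := hp.coeff_zero_eq_prod_roots_of_monic (monic_selfReciprocalQuartic a b)
  rw [natDegree_selfReciprocalQuartic] at h
  norm_num [selfReciprocalQuartic] at h
  exact h.symm

theorem eval_selfReciprocalQuartic {K : Type*} [Field K] (a b : K) {r : K} (hr : r ≠ 0) :
    (selfReciprocalQuartic a b).eval r = r ^ 2 * ((r + r⁻¹) ^ 2 + a * (r + r⁻¹) - b - 2) := by
  simp only [selfReciprocalQuartic, eval_add, eval_sub, eval_mul, eval_pow, eval_X, eval_C]
  field_simp
  ring

end Polynomial

theorem Complex.re_eq_zero_of_sq_eq_ofReal_nonpos {s : ℂ} {x : ℝ} (hx : x ≤ 0) (h : s ^ 2 = x) :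
    s.re = 0 := by
  have hre := congrArg Complex.re h
  have him := congrArg Complex.im h
  simp only [sq, Complex.mul_re, Complex.mul_im, Complex.ofReal_re, Complex.ofReal_im] at hre him
  rcases mul_eq_zero.mp (by linarith : s.im * s.re = 0) with him0 | hre0
  · rw [him0] at hre
    exact mul_self_eq_zero.mp (le_antisymm (by linarith) (mul_self_nonneg _))
  · exact hre0

theorem Complex.add_inv_of_norm_eq_one {r : ℂ} (hr : ‖r‖ = 1) : r + r⁻¹ = 2 * r.re := by
  rw [Complex.inv_eq_conj hr, Complex.add_conj]
  push_cast; ring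

theorem Complex.re_sub_one_div_add_one_pos {z : ℂ} (hz : 1 < ‖z‖) : 0 < ((z - 1) / (z + 1)).re := by
  have hz1 : z + 1 ≠ 0 := fun h => by
    rw [eq_neg_of_add_eq_zero_left h, norm_neg, norm_one] at hz
    exact lt_irrefl 1 hz
  have hre : ((z - 1) / (z + 1)).re = (Complex.normSq z - 1) / Complex.normSq (z + 1) := by
    simp only [Complex.div_re, Complex.sub_re, Complex.sub_im, Complex.add_re, Complex.add_im,
      Complex.one_re, Complex.one_im, Complex.normSq_apply]
    ring
  have hnormSq : 1 < Complex.normSq z := by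
    rw [Complex.normSq_eq_norm_sq]; nlinarith
  rw [hre]
  exact div_pos (by linarith) (Complex.normSq_pos.mpr hz1)

theorem sCN_re_pos {δt : ℝ} (hδt : 0 < δt) {z : ℂ} (hz : 1 < ‖z‖) : 0 < (sCN δt z).re := by
  have hs : sCN δt z = ((2 / δt : ℝ) : ℂ) * ((z - 1) / (z + 1)) := by
    unfold sCN; push_cast; ring
  rw [hs, Complex.re_ofReal_mul]
  exact mul_pos (by positivity) (Complex.re_sub_one_div_add_one_pos hz)

theorem eval_selfReciprocalQuartic_ne_zero_of_norm_eq_one {ε δx : ℝ} (hε : 0 < ε) (hδx : 0 < δx)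
    {s : ℂ} (hs : 0 < s.re) {r : ℂ} (hr : ‖r‖ = 1) :
    (selfReciprocalQuartic (4 * (ε : ℂ) * s ^ 2)
      (2 + 4 * s ^ 2 * ((δx : ℂ) ^ 2 + 2 * (ε : ℂ)))).eval r ≠ 0 := by
  intro hroot
  have hr0 : r ≠ 0 := norm_ne_zero_iff.mp (by rw [hr]; exact one_ne_zero)
  obtain ⟨hlo, hhi⟩ := abs_le.mp (hr ▸ Complex.abs_re_le_norm r)
  have hden : 0 < δx ^ 2 + 2 * ε * (1 - r.re) := by nlinarith
  rw [eval_selfReciprocalQuartic _ _ hr0, Complex.add_inv_of_norm_eq_one hr] at hroot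
  have hsq : s ^ 2 = (((r.re ^ 2 - 1) / (δx ^ 2 + 2 * ε * (1 - r.re)) : ℝ) : ℂ) := by
    have hquad := (mul_eq_zero.mp hroot).resolve_left (pow_ne_zero 2 hr0)
    have hden' : ((δx ^ 2 + 2 * ε * (1 - r.re) : ℝ) : ℂ) ≠ 0 := by exact_mod_cast hden.ne'
    push_cast at hden' ⊢
    field_simp
    linear_combination (-1 / 4 : ℂ) * hquad
  exact hs.ne' (Complex.re_eq_zero_of_sq_eq_ofReal_nonpos
    (div_nonpos_of_nonpos_of_nonneg (by nlinarith) hden.le) hsq)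

open scoped Classical in
/-- For `|z| > 1`, the quartic `r⁴ + 4εs² r³ − (2 + 4s²(δx² + 2ε)) r² + 4εs² r + 1`
with `s = s(z)` has (with multiplicity) exactly two roots in the open unit disk and
exactly two roots outside the closed unit disk, and the product of its roots is `1`. -/
theorem stmt_12 (ε δx δt : ℝ) (hε : 0 < ε) (hδx : 0 < δx) (hδt : 0 < δt)
    (z : ℂ) (hz : 1 < ‖z‖) :
    Multiset.card
      ((X ^ 4 + C (4 * (ε : ℂ) * (sCN δt z) ^ 2) * X ^ 3
        - C (2 + 4 * (sCN δt z) ^ 2 * ((δx : ℂ) ^ 2 + 2 * (ε : ℂ))) * X ^ 2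
        + C (4 * (ε : ℂ) * (sCN δt z) ^ 2) * X + C 1 : Polynomial ℂ).roots.filter
          (fun r => ‖r‖ < 1)) = 2 ∧
    Multiset.card
      ((X ^ 4 + C (4 * (ε : ℂ) * (sCN δt z) ^ 2) * X ^ 3
        - C (2 + 4 * (sCN δt z) ^ 2 * ((δx : ℂ) ^ 2 + 2 * (ε : ℂ))) * X ^ 2
        + C (4 * (ε : ℂ) * (sCN δt z) ^ 2) * X + C 1 : Polynomial ℂ).roots.filter
          (fun r => 1 < ‖r‖)) = 2 ∧
    (X ^ 4 + C (4 * (ε : ℂ) * (sCN δt z) ^ 2) * X ^ 3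
        - C (2 + 4 * (sCN δt z) ^ 2 * ((δx : ℂ) ^ 2 + 2 * (ε : ℂ))) * X ^ 2
        + C (4 * (ε : ℂ) * (sCN δt z) ^ 2) * X + C 1 : Polynomial ℂ).roots.prod = 1 := by
  set P := selfReciprocalQuartic (4 * (ε : ℂ) * (sCN δt z) ^ 2)
    (2 + 4 * (sCN δt z) ^ 2 * ((δx : ℂ) ^ 2 + 2 * (ε : ℂ)))
  have hsplit : P.Splits := IsAlgClosed.splits P
  have hcircle : ∀ r ∈ P.roots, ‖r‖ ≠ 1 := fun r hr hr1 =>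
    eval_selfReciprocalQuartic_ne_zero_of_norm_eq_one hε hδx (sCN_re_pos hδt hz) hr1
      (mem_roots'.mp hr).2
  have hcount := card_roots_filter_norm_lt_one_of_reverse_eq hsplit
    (monic_selfReciprocalQuartic _ _).ne_zero (reverse_selfReciprocalQuartic _ _) hcircle
  rw [natDegree_selfReciprocalQuartic] at hcount
  exact ⟨hcount.1, hcount.2, roots_prod_selfReciprocalQuartic hsplit⟩
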